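/- Suppose 0 ∈ ℝⁿ is a global minimizer of M(s) = f0 + gᵀs + (1/2)sᵀHs + (β/6)‖s‖³ + (σ/4)‖s‖⁴ with σ ≥ 0. Then g = 0 and for the smallest eigenvalue λ_min of H, the univariate function z ↦ (1/2)λ_min z² + (β/6)z³ + (σ/4)z⁴ is nonnegative for all z ≥ 0. -/

import Mathlib

open Matrix Polynomial

noncomputable def vecEnorm {n : ℕ} (s : Fin n → ℝ) : ℝ := Real.sqrt (s ⬝ᵥ s)

noncomputable def Mfun {n : ℕ} (f0 : ℝ) (g : Fin n → ℝ)
    (H : Matrix (Fin n) (Fin n) ℝ) (β σ : ℝ) (s : Fin n → ℝ) : ℝ :=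
  f0 + g ⬝ᵥ s + (1/2) * (s ⬝ᵥ (H *ᵥ s)) + (β/6) * vecEnorm s ^ 3 + (σ/4) * vecEnorm s ^ 4

noncomputable def Bmat {n : ℕ} (H : Matrix (Fin n) (Fin n) ℝ) (β σ : ℝ)
    (s : Fin n → ℝ) : Matrix (Fin n) (Fin n) ℝ :=
  H + ((β/2) * vecEnorm s) • (1 : Matrix (Fin n) (Fin n) ℝ)
    + (σ * vecEnorm s ^ 2) • (1 : Matrix (Fin n) (Fin n) ℝ)

/-! Along a ray `t ↦ t • v`, `M` is a quartic in `t` whose linear coefficient is `g ⬝ᵥ v`.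
Minimality at `0` along the ray `-t • g` forces the linear coefficient `-(g ⬝ᵥ g)` to be
nonnegative, so `g = 0`; along an eigenvector for `λ_min`, `M - f0` is then exactly the
univariate quartic of the conclusion evaluated at `z = t ‖v‖`. -/

lemma nonpos_of_forall_pos_mul_le_quartic {a b c d : ℝ}
    (h : ∀ t : ℝ, 0 < t → a * t ≤ b * t ^ 2 + c * t ^ 3 + d * t ^ 4) : a ≤ 0 := by
  have hlim : Filter.Tendsto (fun t : ℝ => b * t + c * t ^ 2 + d * t ^ 3)
      (nhdsWithin 0 (Set.Ioi 0)) (nhds 0) := by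
    have hcont : Continuous (fun t : ℝ => b * t + c * t ^ 2 + d * t ^ 3) := by fun_prop
    simpa using (hcont.tendsto 0).mono_left nhdsWithin_le_nhds
  refine ge_of_tendsto hlim (eventually_nhdsWithin_of_forall fun t (ht : 0 < t) => ?_)
  have := h t ht
  nlinarith

lemma dotProduct_self_nonneg {ι R : Type*} [Fintype ι] [Ring R] [LinearOrder R]
    [IsStrictOrderedRing R] (v : ι → R) : 0 ≤ v ⬝ᵥ v :=
  Finset.sum_nonneg fun i _ => mul_self_nonneg (v i)

lemma vecEnorm_pos {n : ℕ} {v : Fin n → ℝ} (hv : v ≠ 0) : 0 < vecEnorm v :=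
  Real.sqrt_pos.mpr <| (dotProduct_self_nonneg v).lt_of_ne' (dotProduct_self_eq_zero.not.mpr hv)

lemma vecEnorm_sq {n : ℕ} (v : Fin n → ℝ) : vecEnorm v ^ 2 = v ⬝ᵥ v :=
  Real.sq_sqrt (dotProduct_self_nonneg v)

lemma vecEnorm_smul {n : ℕ} (c : ℝ) (v : Fin n → ℝ) :
    vecEnorm (c • v) = |c| * vecEnorm v := by
  rw [vecEnorm, smul_dotProduct, dotProduct_smul, smul_eq_mul, smul_eq_mul, ← mul_assoc,
    Real.sqrt_mul (mul_self_nonneg c), Real.sqrt_mul_self_eq_abs, vecEnorm]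

lemma Mfun_smul {n : ℕ} (f0 : ℝ) (g : Fin n → ℝ) (H : Matrix (Fin n) (Fin n) ℝ) (β σ c : ℝ)
    (v : Fin n → ℝ) :
    Mfun f0 g H β σ (c • v) = f0 + (g ⬝ᵥ v) * c + (1/2) * (v ⬝ᵥ (H *ᵥ v)) * c ^ 2
      + (β/6) * vecEnorm v ^ 3 * |c| ^ 3 + (σ/4) * vecEnorm v ^ 4 * c ^ 4 := by
  rw [Mfun, vecEnorm_smul, mulVec_smul, dotProduct_smul, smul_dotProduct, dotProduct_smul,
    smul_eq_mul, smul_eq_mul, smul_eq_mul, mul_pow, mul_pow, Even.pow_abs ⟨2, rfl⟩]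
  ring

lemma Mfun_zero {n : ℕ} (f0 : ℝ) (g : Fin n → ℝ) (H : Matrix (Fin n) (Fin n) ℝ) (β σ : ℝ) :
    Mfun f0 g H β σ 0 = f0 := by
  simp [Mfun, vecEnorm]

lemma eq_zero_of_forall_Mfun_zero_le {n : ℕ} {f0 : ℝ} {g : Fin n → ℝ}
    {H : Matrix (Fin n) (Fin n) ℝ} {β σ : ℝ}
    (hmin : ∀ s : Fin n → ℝ, Mfun f0 g H β σ 0 ≤ Mfun f0 g H β σ s) : g = 0 := by
  have hquartic : g ⬝ᵥ g ≤ 0 := by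
    refine nonpos_of_forall_pos_mul_le_quartic (b := (1/2) * (g ⬝ᵥ (H *ᵥ g)))
      (c := (β/6) * vecEnorm g ^ 3) (d := (σ/4) * vecEnorm g ^ 4) fun t ht => ?_
    have := hmin ((-t) • g)
    rw [Mfun_zero, Mfun_smul, abs_neg, abs_of_pos ht, neg_sq, Even.neg_pow ⟨2, rfl⟩] at this
    linarith
  exact dotProduct_self_eq_zero.mp (hquartic.antisymm (dotProduct_self_nonneg g))

lemma Mfun_smul_eigenvector {n : ℕ} (f0 : ℝ) (H : Matrix (Fin n) (Fin n) ℝ) (β σ : ℝ)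
    {lam c : ℝ} {v : Fin n → ℝ} (hv : H *ᵥ v = lam • v) (hc : 0 ≤ c) :
    Mfun f0 0 H β σ (c • v) = f0 + (1/2) * lam * (c * vecEnorm v) ^ 2
      + (β/6) * (c * vecEnorm v) ^ 3 + (σ/4) * (c * vecEnorm v) ^ 4 := by
  rw [Mfun_smul, hv, dotProduct_smul, smul_eq_mul, ← vecEnorm_sq, zero_dotProduct,
    abs_of_nonneg hc]
  ring

theorem stmt7_general {n : ℕ} (f0 : ℝ) (g : Fin n → ℝ) (H : Matrix (Fin n) (Fin n) ℝ)
    (β σ : ℝ) (lamMin : ℝ)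
    (heig : ∃ v : Fin n → ℝ, v ≠ 0 ∧ H *ᵥ v = lamMin • v)
    (hmin : ∀ s : Fin n → ℝ, Mfun f0 g H β σ 0 ≤ Mfun f0 g H β σ s) :
    g = 0 ∧ ∀ z : ℝ, 0 ≤ z →
      0 ≤ (1/2) * lamMin * z^2 + (β/6) * z^3 + (σ/4) * z^4 := by
  obtain rfl := eq_zero_of_forall_Mfun_zero_le hmin
  refine ⟨rfl, fun z hz => ?_⟩
  obtain ⟨v, hv0, hv⟩ := heig
  have hnorm := vecEnorm_pos hv0
  have h := hmin ((z / vecEnorm v) • v)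
  rw [Mfun_zero, Mfun_smul_eigenvector f0 H β σ hv (div_nonneg hz hnorm.le),
    div_mul_cancel₀ z hnorm.ne'] at h
  linarith

theorem stmt7 {n : ℕ} (f0 : ℝ) (g : Fin n → ℝ) (H : Matrix (Fin n) (Fin n) ℝ)
    (hH : H.IsSymm) (β σ : ℝ) (hσ : 0 ≤ σ) (lamMin : ℝ)
    (heig : ∃ v : Fin n → ℝ, v ≠ 0 ∧ H *ᵥ v = lamMin • v)
    (hlow : ∀ v : Fin n → ℝ, lamMin * (v ⬝ᵥ v) ≤ v ⬝ᵥ (H *ᵥ v))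
    (hmin : ∀ s : Fin n → ℝ, Mfun f0 g H β σ 0 ≤ Mfun f0 g H β σ s) :
    g = 0 ∧ ∀ z : ℝ, 0 ≤ z →
      0 ≤ (1/2) * lamMin * z^2 + (β/6) * z^3 + (σ/4) * z^4 :=
  stmt7_general f0 g H β σ lamMin heig hmin
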